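/- arXiv:2511.06485 — 4 statements merged into one kernel-verified Lean document; each statement's English description precedes it below -/
import Mathlib

section
/- Let k ≥ 1 and let n = 2^k + m with 0 ≤ m < 2^k. Then the zero- and one-counts of the Thue–Morse sequence satisfy λ_n = 2^{k−1} + α_m and α_n = 2^{k−1} + λ_m, where λ_j and α_j are the number of zeros and ones among the first j terms. -/
/-- The Thue–Morse sequence: number of `1`s in the binary expansion, mod 2. -/
def thueMorse (n : ℕ) : ℕ := (Nat.digits 2 n).count 1 % 2

/-- `λ_n`: number of zeros among the first `n` terms of the Thue–Morse sequence. -/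
def tmZeros (n : ℕ) : ℕ := ((Finset.range n).filter fun j => thueMorse j = 0).card

/-- `α_n`: number of ones among the first `n` terms of the Thue–Morse sequence. -/
def tmOnes (n : ℕ) : ℕ := ((Finset.range n).filter fun j => thueMorse j = 1).card

lemma tm_count_flip : ∀ k j : ℕ, j < 2 ^ k →
    (Nat.digits 2 (2 ^ k + j)).count 1 = 1 + (Nat.digits 2 j).count 1 := by
  intro k
  induction k with
  | zero =>
    intro j hj
    interval_cases j
    simp
  | succ k ih =>
    intro j hj
    have hpos : 0 < 2 ^ (k + 1) + j := by positivity
    rw [Nat.digits_def' (by norm_num : 1 < 2) hpos]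
    have h2 : 2 ^ (k + 1) + j = 2 * 2 ^ k + j := by ring
    have hmod : (2 ^ (k + 1) + j) % 2 = j % 2 := by
      rw [h2, Nat.mul_add_mod]
    have hdiv : (2 ^ (k + 1) + j) / 2 = 2 ^ k + j / 2 := by
      rw [h2, Nat.mul_add_div (by norm_num)]
    have hj2 : j / 2 < 2 ^ k := by
      rw [Nat.div_lt_iff_lt_mul (by norm_num)]
      calc j < 2 ^ (k + 1) := hj
        _ = 2 ^ k * 2 := by ring
    rw [hmod, hdiv, List.count_cons, ih _ hj2]
    rcases Nat.eq_zero_or_pos j with h0 | hjpos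
    · subst h0; simp
    · rw [Nat.digits_def' (by norm_num : 1 < 2) hjpos, List.count_cons]
      ring

lemma tm_flip_zero {k j : ℕ} (hj : j < 2 ^ k) :
    (thueMorse (2 ^ k + j) = 0 ↔ thueMorse j = 1) ∧
    (thueMorse (2 ^ k + j) = 1 ↔ thueMorse j = 0) := by
  have h := tm_count_flip k j hj
  unfold thueMorse
  rw [h]
  omega

lemma split_card (a m : ℕ) (p : ℕ → Prop) [DecidablePred p] :
    ((Finset.range (a + m)).filter p).card =
      ((Finset.range a).filter p).card +
        ((Finset.range m).filter fun i => p (a + i)).card := by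
  simp only [Finset.card_filter]
  exact Finset.sum_range_add _ a m

lemma tm_pow_counts : ∀ k : ℕ, 1 ≤ k →
    tmZeros (2 ^ k) = 2 ^ (k - 1) ∧ tmOnes (2 ^ k) = 2 ^ (k - 1) := by
  intro k hk
  induction k with
  | zero => omega
  | succ k ih =>
    rcases Nat.eq_zero_or_pos k with h0 | hkpos
    · subst h0
      have h0 : thueMorse 0 = 0 := by simp [thueMorse]
      have h1 : thueMorse 1 = 1 := by norm_num [thueMorse]
      have hr : Finset.range 2 = {0, 1} := by decide
      refine ⟨?_, ?_⟩ <;>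
        simp [tmZeros, tmOnes, hr, Finset.filter_insert, Finset.filter_singleton, h0, h1]
    · obtain ⟨hz, ho⟩ := ih hkpos
      have hlt : 2 ^ k ≤ 2 ^ k := le_refl _
      have hsplit : (2 : ℕ) ^ (k + 1) = 2 ^ k + 2 ^ k := by ring
      have e0 : ((Finset.range (2 ^ k)).filter fun i => thueMorse (2 ^ k + i) = 0) =
          ((Finset.range (2 ^ k)).filter fun j => thueMorse j = 1) := by
        apply Finset.filter_congr
        intro i hi
        simp only [Finset.mem_range] at hi
        simp [(tm_flip_zero hi).1]
      have e1 : ((Finset.range (2 ^ k)).filter fun i => thueMorse (2 ^ k + i) = 1) =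
          ((Finset.range (2 ^ k)).filter fun j => thueMorse j = 0) := by
        apply Finset.filter_congr
        intro i hi
        simp only [Finset.mem_range] at hi
        simp [(tm_flip_zero hi).2]
      have hzeros : tmZeros (2 ^ (k + 1)) = tmZeros (2 ^ k) + tmOnes (2 ^ k) := by
        rw [hsplit]
        have := split_card (2 ^ k) (2 ^ k) (fun j => thueMorse j = 0)
        rw [e0] at this
        exact this
      have hones : tmOnes (2 ^ (k + 1)) = tmOnes (2 ^ k) + tmZeros (2 ^ k) := by
        rw [hsplit]
        have := split_card (2 ^ k) (2 ^ k) (fun j => thueMorse j = 1)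
        rw [e1] at this
        exact this
      have : 2 ^ (k - 1) + 2 ^ (k - 1) = 2 ^ k := by
        have : k - 1 + 1 = k := by omega
        calc 2 ^ (k - 1) + 2 ^ (k - 1) = 2 ^ (k - 1 + 1) := by ring
          _ = 2 ^ k := by rw [‹k - 1 + 1 = k›]
      constructor
      · rw [hzeros, hz, ho]; simpa using this
      · rw [hones, ho, hz]; simpa using this

theorem tm_counts_split (k m : ℕ) (hk : 1 ≤ k) (hm : m < 2 ^ k) :
    tmZeros (2 ^ k + m) = 2 ^ (k - 1) + tmOnes m ∧
      tmOnes (2 ^ k + m) = 2 ^ (k - 1) + tmZeros m := by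
  obtain ⟨hz, ho⟩ := tm_pow_counts k hk
  have e0 : ((Finset.range m).filter fun i => thueMorse (2 ^ k + i) = 0) =
      ((Finset.range m).filter fun j => thueMorse j = 1) := by
    apply Finset.filter_congr
    intro i hi
    simp only [Finset.mem_range] at hi
    simp [(tm_flip_zero (lt_trans hi hm)).1]
  have e1 : ((Finset.range m).filter fun i => thueMorse (2 ^ k + i) = 1) =
      ((Finset.range m).filter fun j => thueMorse j = 0) := by
    apply Finset.filter_congr
    intro i hi
    simp only [Finset.mem_range] at hi
    simp [(tm_flip_zero (lt_trans hi hm)).2]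
  have s0 := split_card (2 ^ k) m (fun j => thueMorse j = 0)
  have s1 := split_card (2 ^ k) m (fun j => thueMorse j = 1)
  rw [e0] at s0
  rw [e1] at s1
  constructor
  · calc tmZeros (2 ^ k + m) = tmZeros (2 ^ k) + tmOnes m := s0
      _ = 2 ^ (k - 1) + tmOnes m := by rw [hz]
  · calc tmOnes (2 ^ k + m) = tmOnes (2 ^ k) + tmZeros m := s1
      _ = 2 ^ (k - 1) + tmZeros m := by rw [ho]
end

section
/- Let α = (3 − √5)/2. For every j ≥ 0 and every index n with 0 ≤ n < |s_j|, the n-th letter (0-indexed) of the finite Fibonacci word s_j equals ⌊(n+2)α⌋ − ⌊(n+1)α⌋. In particular, the infinite Fibonacci word (the limit of the s_j) is the characteristic Sturmian word u with u_n = ⌊(n+2)α⌋ − ⌊(n+1)α⌋. -/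
/-!
Write `ψ = (1 - √5)/2`, so that `α = ψ²` and, by Binet, `F (k+2) α = F k + ψ ^ (k+2)`.
Since `s (j+2) = s (j+1) ++ s j`, the number of `1`s among the first `m` letters of `s j` is
`⌊(m + 1) α⌋` by induction, provided the error term `ψ ^ (j+3)` never moves `(r + 1) α`
across an integer for `r ≤ F (j+2)`. This is the Diophantine estimate `|ψ| ^ k < |t α - p|`
for `0 < t < F k`: the norm `(t α - p)(t φ² - p) = t² - 3tp + p²` is a nonzero integer, while
`|t φ² - p| ≤ |t α - p| + t √5` is roughly at most `φ ^ k = |ψ| ^ (-k)`.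
-/

/-- The finite Fibonacci words: `s 0 = 0`, `s 1 = 01`, `s (j+2) = s (j+1) ++ s j`. -/
def fibWord : ℕ → List ℕ
  | 0 => [0]
  | 1 => [0, 1]
  | (j + 2) => fibWord (j + 1) ++ fibWord j

open Real goldenRatio

lemma Int.floor_add_eq_floor_of_forall_lt {x δ : ℝ} (h : ∀ p : ℤ, |δ| < |x - p|) :
    ⌊x + δ⌋ = ⌊x⌋ := by
  have h₀ := h ⌊x⌋
  have h₁ := h (⌊x⌋ + 1)
  rw [abs_of_nonneg (sub_nonneg.mpr (Int.floor_le x))] at h₀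
  push_cast at h₁
  rw [abs_of_neg (sub_neg.mpr (Int.lt_floor_add_one x))] at h₁
  rw [Int.floor_eq_iff]
  constructor <;> linarith [neg_abs_le δ, le_abs_self δ]

lemma Irrational.natCast_mul_sub_intCast_ne_zero {x : ℝ} (hx : Irrational x) {t : ℕ}
    (ht : t ≠ 0) (p : ℤ) : t * x - p ≠ 0 := by
  simpa using ((hx.intCast_mul (Int.natCast_ne_zero.mpr ht)).sub_intCast p).ne_zero

namespace Real

lemma goldenConj_sq_eq_three_sub_sqrt_five_div_two : ψ ^ 2 = (3 - √5) / 2 := by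
  rw [goldenConj_sq]; ring

lemma goldenConj_sq_lt_half : ψ ^ 2 < 1 / 2 := by
  rw [goldenConj_sq_eq_three_sub_sqrt_five_div_two]
  nlinarith [sq_sqrt (show (0 : ℝ) ≤ 5 by norm_num), sqrt_nonneg 5]

lemma one_third_lt_goldenConj_sq : 1 / 3 < ψ ^ 2 := by
  rw [goldenConj_sq_eq_three_sub_sqrt_five_div_two]
  nlinarith [sq_sqrt (show (0 : ℝ) ≤ 5 by norm_num), sqrt_nonneg 5]

lemma abs_goldenConj_lt_one : |ψ| < 1 := by
  rw [abs_lt]; exact ⟨neg_one_lt_goldenConj, goldenConj_neg.trans one_pos⟩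

lemma fib_add_two_mul_goldenConj_sq (k : ℕ) :
    (Nat.fib (k + 2) : ℝ) * ψ ^ 2 = Nat.fib k + ψ ^ (k + 2) := by
  rw [← goldenConj_mul_fib_succ_add_fib (k + 1), goldenConj_sq, Nat.fib_add_two (n := k)]
  push_cast; ring

lemma floor_goldenConj_sq_add_pow {m : ℕ} (hm : 2 ≤ m) : ⌊ψ ^ 2 + ψ ^ m⌋ = 0 := by
  have hle : |ψ ^ m| ≤ ψ ^ 2 := by
    rw [abs_pow, ← sq_abs ψ]
    exact pow_le_pow_of_le_one (abs_nonneg ψ) abs_goldenConj_lt_one.le hm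
  have := goldenConj_sq_lt_half
  rw [abs_le] at hle
  rw [Int.floor_eq_zero_iff, Set.mem_Ico]
  constructor <;> linarith

lemma irrational_goldenConj_sq : Irrational (ψ ^ 2) := by
  rw [goldenConj_sq]; exact_mod_cast goldenConj_irrational.add_natCast 1

lemma irrational_goldenRatio_sq : Irrational (φ ^ 2) := by
  rw [goldenRatio_sq]; exact_mod_cast goldenRatio_irrational.add_natCast 1

lemma goldenRatio_sq_sub_goldenConj_sq : φ ^ 2 - ψ ^ 2 = √5 := by
  rw [goldenRatio_sq, goldenConj_sq]; ring

lemma mul_goldenConj_sq_sub_mul_mul_goldenRatio_sq_sub (t p : ℝ) :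
    (t * ψ ^ 2 - p) * (t * φ ^ 2 - p) = t ^ 2 - 3 * t * p + p ^ 2 := by
  rw [show (t * ψ ^ 2 - p) * (t * φ ^ 2 - p)
      = t ^ 2 * (φ * ψ) ^ 2 - t * p * (φ ^ 2 + ψ ^ 2) + p ^ 2 by ring,
    goldenRatio_mul_goldenConj, goldenRatio_sq, goldenConj_sq]
  linear_combination (-t * p) * goldenRatio_add_goldenConj

lemma pow_abs_goldenConj_mul_fib_mul_sqrt_five_le (k : ℕ) :
    |ψ| ^ k * (Nat.fib k * √5) ≤ 1 + (|ψ| ^ k) ^ 2 := by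
  have hφ : |ψ| ^ k * φ ^ k = 1 := by
    rw [← abs_of_pos goldenRatio_pos, ← mul_pow, ← abs_mul, goldenConj_mul_goldenRatio]; simp
  have hψ : -(|ψ| ^ k * ψ ^ k) ≤ (|ψ| ^ k) ^ 2 := by
    have := neg_abs_le (|ψ| ^ k * ψ ^ k)
    rw [abs_mul, abs_pow, abs_pow, abs_abs, ← sq] at this
    exact neg_le.mp this
  rw [coe_fib_eq, div_mul_cancel₀ _ (by positivity), mul_sub, hφ]
  linarith

lemma pow_abs_goldenConj_lt_abs_mul_goldenConj_sq_sub {k t : ℕ} (ht : t ≠ 0)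
    (htk : t < Nat.fib k) (p : ℤ) : |ψ| ^ k < |t * ψ ^ 2 - p| := by
  set d := (t : ℝ) * ψ ^ 2 - p
  set e := |ψ| ^ k
  have hconj : d + t * √5 = t * φ ^ 2 - p := by
    rw [← goldenRatio_sq_sub_goldenConj_sq]; ring
  have hnorm : 1 ≤ |d| * |d + t * √5| := by
    have hN : (((t : ℤ) ^ 2 - 3 * t * p + p ^ 2 : ℤ) : ℝ) = d * (d + t * √5) := by
      rw [hconj, mul_goldenConj_sq_sub_mul_mul_goldenRatio_sq_sub]; push_cast; ring
    have hne : d * (d + t * √5) ≠ 0 := by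
      rw [hconj]
      exact mul_ne_zero (irrational_goldenConj_sq.natCast_mul_sub_intCast_ne_zero ht p)
        (irrational_goldenRatio_sq.natCast_mul_sub_intCast_ne_zero ht p)
    rw [← hN] at hne
    rw [← abs_mul, ← hN]
    exact_mod_cast Int.one_le_abs (by exact_mod_cast hne)
  have he : 0 < e := pow_pos (abs_pos.mpr goldenConj_ne_zero) k
  have he1 : e ≤ 1 := pow_le_one₀ (abs_nonneg ψ) abs_goldenConj_lt_one.le
  have hbinet := pow_abs_goldenConj_mul_fib_mul_sqrt_five_le k
  have h5 : 2 < √5 := (lt_sqrt zero_le_two).mpr (by norm_num)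
  have htk' : (t : ℝ) + 1 ≤ Nat.fib k := by exact_mod_cast htk
  by_contra! hde
  have : |d| * |d + t * √5| ≤ e * (e + t * √5) := by
    gcongr
    calc |d + t * √5| ≤ |d| + |t * √5| := abs_add_le _ _
      _ = |d| + t * √5 := by rw [abs_of_nonneg (a := (t : ℝ) * √5) (by positivity)]
      _ ≤ e + t * √5 := by gcongr
  have : e * (t * √5) ≤ e * ((Nat.fib k - 1) * √5) := by gcongr; linarith
  -- `1 ≤ e * (e + (F k - 1) * √5) ≤ 1 + e * (2 * e - √5) < 1`
  nlinarith [mul_pos he (show 0 < √5 - 2 * e by linarith)]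

lemma floor_mul_goldenConj_sq_add_pow {j t : ℕ} (ht : t ≠ 0) (htj : t ≤ Nat.fib (j + 2) + 1) :
    ⌊t * ψ ^ 2 + ψ ^ (j + 3)⌋ = ⌊t * ψ ^ 2⌋ := by
  rcases htj.lt_or_eq with htj | rfl
  · refine Int.floor_add_eq_floor_of_forall_lt fun p ↦ ?_
    rw [abs_pow]
    exact pow_abs_goldenConj_lt_abs_mul_goldenConj_sq_sub ht
      ((Nat.lt_succ_iff.mp htj).trans_lt (Nat.fib_lt_fib_succ (by omega))) p
  · -- `t = F (j+2) + 1` lies beyond the Diophantine range, but there both floors equal `F j`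
    have hsum : ψ ^ (j + 2) + ψ ^ (j + 3) = ψ ^ (j + 4) := by
      linear_combination (-ψ ^ (j + 2)) * goldenConj_sq
    have hmul : ((Nat.fib (j + 2) + 1 : ℕ) : ℝ) * ψ ^ 2
        = Nat.fib j + (ψ ^ 2 + ψ ^ (j + 2)) := by
      push_cast; rw [add_mul, fib_add_two_mul_goldenConj_sq]; ring
    rw [hmul, Int.floor_natCast_add, floor_goldenConj_sq_add_pow (by omega),
      show (Nat.fib j : ℝ) + (ψ ^ 2 + ψ ^ (j + 2)) + ψ ^ (j + 3)
        = Nat.fib j + (ψ ^ 2 + ψ ^ (j + 4)) by rw [← hsum]; ring,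
      Int.floor_natCast_add, floor_goldenConj_sq_add_pow (by omega)]

end Real

lemma fibWord_length (j : ℕ) : (fibWord j).length = Nat.fib (j + 2) := by
  induction j using Nat.twoStepInduction with
  | zero => rfl
  | one => rfl
  | more j ih₀ ih₁ =>
    rw [fibWord, List.length_append, ih₀, ih₁, Nat.fib_add_two (n := j + 2), add_comm]

lemma fibWord_sum (j : ℕ) : (fibWord j).sum = Nat.fib j := by
  induction j using Nat.twoStepInduction with
  | zero => rfl
  | one => rfl
  | more j ih₀ ih₁ => rw [fibWord, List.sum_append, ih₀, ih₁, Nat.fib_add_two, add_comm]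

lemma sum_take_fibWord {j m : ℕ} (hm : m ≤ Nat.fib (j + 2)) :
    (((fibWord j).take m).sum : ℤ) = ⌊(m + 1) * ψ ^ 2⌋ := by
  have h₃ := one_third_lt_goldenConj_sq
  have h₂ := goldenConj_sq_lt_half
  induction j using Nat.twoStepInduction generalizing m with
  | zero | one =>
    interval_cases m <;> refine (Int.floor_eq_iff.mpr ⟨?_, ?_⟩).symm <;>
      norm_num [fibWord] at h₂ h₃ ⊢ <;> linarith
  | more j ih₀ ih₁ =>
    rcases le_or_gt m (Nat.fib (j + 3)) with hm' | hm'
    · rw [fibWord, List.take_append_of_le_length (by rwa [fibWord_length])]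
      exact ih₁ hm'
    · obtain ⟨r, rfl⟩ : ∃ r, m = Nat.fib (j + 3) + r := ⟨m - Nat.fib (j + 3), by omega⟩
      have hr : r ≤ Nat.fib (j + 2) := by
        have : Nat.fib (j + 2 + 2) = Nat.fib (j + 2) + Nat.fib (j + 3) := Nat.fib_add_two
        omega
      rw [fibWord, ← fibWord_length (j + 1), List.take_length_add_append, List.sum_append,
        fibWord_sum, Nat.cast_add, ih₀ hr, fibWord_length]
      have hsplit : ((Nat.fib (j + 3) + r : ℕ) + 1 : ℝ) * ψ ^ 2
          = Nat.fib (j + 1) + ((r + 1 : ℕ) * ψ ^ 2 + ψ ^ (j + 3)) := by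
        push_cast; rw [add_assoc, add_mul, fib_add_two_mul_goldenConj_sq]; ring
      rw [hsplit, Int.floor_natCast_add, floor_mul_goldenConj_sq_add_pow (by omega) (by omega)]
      push_cast; ring

theorem fibWord_sturmian (j n : ℕ) (h : n < (fibWord j).length) :
    ((fibWord j)[n]'h : ℤ) =
      ⌊((n : ℝ) + 2) * ((3 - Real.sqrt 5) / 2)⌋ -
        ⌊((n : ℝ) + 1) * ((3 - Real.sqrt 5) / 2)⌋ := by
  have hn : n + 1 ≤ Nat.fib (j + 2) := fibWord_length j ▸ h
  have hsucc := sum_take_fibWord hn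
  rw [List.sum_take_succ _ _ h, Nat.cast_add, sum_take_fibWord (Nat.le_of_succ_le hn)] at hsucc
  rw [← goldenConj_sq_eq_three_sub_sqrt_five_div_two]
  push_cast at hsucc
  rw [show (n : ℝ) + 2 = n + 1 + 1 by ring, ← hsucc]; ring
end

section
/- Let x be a nonempty finite word and let w = x^ω = x x x ⋯ be the periodic infinite word with period x. If x = uv where u and v are palindromes, then the strictly increasing sequence n_1 < n_2 < ⋯ of all lengths of palindromic prefixes of w satisfies limsup_{i→∞} n_{i+1}/n_i = 1; that is, the palindrome density dens_p(w) := (limsup_{i→∞} n_{i+1}/n_i)^{-1} equals 1. -/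
/-!
If `x = u ++ v` with `u`, `v` palindromes, the periodic word `x^ω` is invariant under the
reflection `n ↦ |u| - 1 - n (mod |x|)`: on the block `u` this is the symmetry of `u`, on the
block `v` that of `v`. Hence every prefix whose length is `≡ |u| (mod |x|)` is a palindrome, so
consecutive palindromic prefix lengths differ by at most `|x|`, and
`n_{i+1} / n_i ≤ 1 + |x| / n_i → 1`.
-/

/-- The prefix of length `n` of `w` is a palindrome. -/
def PalindromicPrefix {A : Type*} (w : ℕ → A) (n : ℕ) : Prop :=
  ∀ i < n, w i = w (n - 1 - i)

open Filter Topology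

theorem List.Palindrome.getElem_eq {A : Type*} {u : List A} (hu : u.Palindrome) {i : ℕ}
    (hi : i < u.length) : u[i] = u[u.length - 1 - i] := by
  rw [← List.getElem_reverse (by simpa using hi)]
  exact getElem_congr_coll hu.reverse_eq.symm

theorem List.getElem_append_eq_of_add_modEq {A : Type*} {u v : List A} (hu : u.Palindrome)
    (hv : v.Palindrome) {i j : ℕ} (hi : i < (u ++ v).length) (hj : j < (u ++ v).length)
    (h : i + j + 1 ≡ u.length [MOD (u ++ v).length]) : (u ++ v)[i] = (u ++ v)[j] := by
  rw [List.length_append] at hi hj h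
  by_cases hiu : i < u.length
  · have hj' : j = u.length - 1 - i := by
      refine Nat.ModEq.eq_of_lt_of_lt (Nat.ModEq.add_left_cancel' (i + 1) ?_) hj (by omega)
      convert h using 1 <;> omega
    subst hj'
    rw [List.getElem_append_left hiu, List.getElem_append_left (by omega), hu.getElem_eq hiu]
  · have hj' : j = u.length + (u.length + v.length - 1 - i) := by
      refine Nat.ModEq.eq_of_lt_of_lt (Nat.ModEq.add_left_cancel' (i + 1) ?_) hj (by omega)
      calc i + 1 + j = i + j + 1 := by ring
        _ ≡ u.length [MOD u.length + v.length] := h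
        _ ≡ u.length + (u.length + v.length) [MOD u.length + v.length] :=
          (Nat.add_mod_right _ _).symm
        _ = i + 1 + (u.length + (u.length + v.length - 1 - i)) := by omega
    subst hj'
    rw [List.getElem_append_right (by omega), List.getElem_append_right (by omega),
      hv.getElem_eq (by omega)]
    congr 1; omega

theorem palindromicPrefix_of_modEq {A : Type*} {u v : List A} (hu : u.Palindrome)
    (hv : v.Palindrome) (hL : 0 < (u ++ v).length) {m : ℕ}
    (hm : m ≡ u.length [MOD (u ++ v).length]) :
    PalindromicPrefix (fun n => (u ++ v)[n % (u ++ v).length]'(Nat.mod_lt n hL)) m := by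
  intro i hi
  refine List.getElem_append_eq_of_add_modEq hu hv _ _ ?_
  calc i % _ + (m - 1 - i) % _ + 1 ≡ i + (m - 1 - i) + 1 [MOD (u ++ v).length] :=
        ((Nat.mod_modEq _ _).add (Nat.mod_modEq _ _)).add_right 1
    _ = m := by omega
    _ ≡ u.length [MOD (u ++ v).length] := hm

theorem StrictMono.apply_succ_le_of_apply_lt {N : ℕ → ℕ} (hN : StrictMono N) {i j : ℕ}
    (h : N i < N j) : N (i + 1) ≤ N j :=
  hN.monotone (hN.lt_iff_lt.mp h)

theorem Nat.exists_modEq_mem_Ioc (n r : ℕ) {L : ℕ} (hL : 0 < L) :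
    ∃ m, n < m ∧ m ≤ n + L ∧ m ≡ r [MOD L] := by
  obtain ⟨q, hq⟩ : ∃ q, L * q + (n + L - r % L) % L = n + L - r % L := ⟨_, Nat.div_add_mod _ _⟩
  have := Nat.mod_lt (n + L - r % L) hL
  have := Nat.mod_lt r hL
  refine ⟨r % L + L * q, by omega, by omega, ?_⟩
  simp [Nat.ModEq]

theorem StrictMono.tendsto_div_of_apply_succ_le_add {N : ℕ → ℕ} (hN : StrictMono N) (C : ℕ)
    (hC : ∀ i, N (i + 1) ≤ N i + C) :
    Tendsto (fun i => (N (i + 1) : ℝ) / N i) atTop (𝓝 1) := by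
  have hNtop : Tendsto (fun i => (N i : ℝ)) atTop atTop :=
    tendsto_natCast_atTop_atTop.comp hN.tendsto_atTop
  have hupper : Tendsto (fun i => 1 + (C : ℝ) / N i) atTop (𝓝 1) := by
    simpa using tendsto_const_nhds.add (tendsto_const_nhds.div_atTop hNtop)
  have hpos : ∀ᶠ i in atTop, (0 : ℝ) < N i := hNtop.eventually_gt_atTop 0
  refine tendsto_of_tendsto_of_tendsto_of_le_of_le' tendsto_const_nhds hupper ?_ ?_
  · filter_upwards [hpos] with i hi
    rw [one_le_div hi]
    exact_mod_cast (hN i.lt_succ_self).le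
  · filter_upwards [hpos] with i hi
    rw [div_le_iff₀ hi, add_mul, one_mul, div_mul_cancel₀ _ hi.ne']
    exact_mod_cast hC i

theorem periodic_palindrome_density_eq_one {A : Type*} (x : List A) (hx : x ≠ [])
    (u v : List A) (hu : u.Palindrome) (hv : v.Palindrome) (hx' : x = u ++ v)
    (w : ℕ → A)
    (hw : ∀ n : ℕ, w n = x.get ⟨n % x.length, Nat.mod_lt n (List.length_pos_iff.mpr hx)⟩)
    (N : ℕ → ℕ) (hmono : StrictMono N)
    (hrange : ∀ n : ℕ, (1 ≤ n ∧ PalindromicPrefix w n) ↔ ∃ i, N i = n) :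
    Filter.limsup (fun i => (N (i + 1) : ℝ) / (N i : ℝ)) Filter.atTop = 1 := by
  subst hx'
  have hL : 0 < (u ++ v).length := List.length_pos_iff.mpr hx
  have hw' : w = fun n => (u ++ v)[n % (u ++ v).length]'(Nat.mod_lt n hL) := funext hw
  have hgap : ∀ i, N (i + 1) ≤ N i + (u ++ v).length := by
    intro i
    obtain ⟨m, hnm, hmle, hm⟩ := Nat.exists_modEq_mem_Ioc (N i) u.length hL
    obtain ⟨j, rfl⟩ := (hrange m).mp
      ⟨by omega, hw' ▸ palindromicPrefix_of_modEq hu hv hL hm⟩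
    exact (hmono.apply_succ_le_of_apply_lt hnm).trans hmle
  exact (hmono.tendsto_div_of_apply_succ_le_add _ hgap).limsup_eq
end

section
/- Let x be a nonempty finite word and let w = x^ω be the periodic infinite word with period x. If w has palindromic prefixes of arbitrarily large length, then there exist palindromes u and v (possibly empty) such that x = uv. -/
namespace List

variable {A : Type*}

theorem Palindrome.of_getElem {l : List A}
    (h : ∀ i (hi : i < l.length), l[i] = l[l.length - 1 - i]) : l.Palindrome := by
  refine .of_reverse_eq (ext_getElem length_reverse fun i hi _ => ?_)
  rw [getElem_reverse, h]
  simp only [length_reverse] at hi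
  congr 1
  omega

/-- The hypothesis says that `x` is invariant under the reflection `i ↦ m - 1 - i` of `ℤ/|x|`
(shifted by `|x|` to avoid truncated subtraction). -/
theorem palindrome_take_drop_of_getElem_eq_reflect (x : List A) {m : ℕ} (hm : m ≤ x.length)
    (h : ∀ i (hi : i < x.length),
      x[i] = x[(m + x.length - 1 - i) % x.length]'(Nat.mod_lt _ (by omega))) :
    (x.take m).Palindrome ∧ (x.drop m).Palindrome := by
  constructor
  · refine .of_getElem fun i hi => ?_
    simp only [length_take, Nat.min_eq_left hm] at hi ⊢
    rw [getElem_take, getElem_take, h]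
    congr 1
    rw [show m + x.length - 1 - i = (m - 1 - i) + x.length by omega, Nat.add_mod_right,
      Nat.mod_eq_of_lt (by omega)]
  · refine .of_getElem fun i hi => ?_
    simp only [length_drop] at hi ⊢
    rw [getElem_drop, getElem_drop, h]
    congr 1
    rw [Nat.mod_eq_of_lt (by omega)]
    omega

end List

theorem PalindromicPrefix.getElem_eq_reflect {A : Type*} {w : ℕ → A} {n : ℕ}
    (hpal : PalindromicPrefix w n) {x : List A} (hx : x ≠ [])
    (hw : ∀ n : ℕ, w n = x.get ⟨n % x.length, Nat.mod_lt n (List.length_pos_iff.mpr hx)⟩)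
    (hn : x.length ≤ n) (i : ℕ) (hi : i < x.length) :
    x[i] = x[(n % x.length + x.length - 1 - i) % x.length]'(Nat.mod_lt _ (by omega)) := by
  have hmod : (n - 1 - i) % x.length = (n % x.length + x.length - 1 - i) % x.length := by
    have := Nat.div_add_mod n x.length
    calc (n - 1 - i) % x.length
        = (n - 1 - i + x.length) % x.length := (Nat.add_mod_right _ _).symm
      _ = (n % x.length + x.length - 1 - i + x.length * (n / x.length)) % x.length := by
          congr 1; omega
      _ = (n % x.length + x.length - 1 - i) % x.length := Nat.add_mul_mod_self_left _ _ _
  have := hpal i (by omega)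
  rw [hw, hw] at this
  simpa only [List.get_eq_getElem, Nat.mod_eq_of_lt hi, hmod] using this

theorem periodic_word_with_palindromic_prefixes {A : Type*} (x : List A) (hx : x ≠ [])
    (w : ℕ → A)
    (hw : ∀ n : ℕ, w n = x.get ⟨n % x.length, Nat.mod_lt n (List.length_pos_iff.mpr hx)⟩)
    (hpal : ∀ M : ℕ, ∃ n > M, PalindromicPrefix w n) :
    ∃ u v : List A, u.Palindrome ∧ v.Palindrome ∧ x = u ++ v := by
  obtain ⟨n, hn, hpaln⟩ := hpal x.length
  have hm : n % x.length < x.length := Nat.mod_lt _ (List.length_pos_iff.mpr hx)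
  obtain ⟨hu, hv⟩ := x.palindrome_take_drop_of_getElem_eq_reflect hm.le
    (hpaln.getElem_eq_reflect hx hw hn.le)
  exact ⟨_, _, hu, hv, (x.take_append_drop _).symm⟩
end
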